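/- Let C = [C_1,…,C_r] be the W-characteristic set of ⟨P⟩. Then ⟨C_1,…,C_r⟩ ⊆ ⟨P⟩ ⊆ sat(C). -/

import Mathlib

open MvPolynomial

namespace CharSets

variable {n : ℕ} {K : Type*} [Field K]

/-- The coefficient of `x_i ^ d` in `F`, as a polynomial in the remaining variables. -/
noncomputable def coefv (i : Fin n) (d : ℕ) (F : MvPolynomial (Fin n) K) :
    MvPolynomial (Fin n) K :=
  ∑ m ∈ F.support.filter (fun m => m i = d), monomial (Finsupp.erase i m) (F.coeff m)

/-- The leading coefficient of `F` with respect to the variable `x_i`. -/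
noncomputable def lcv (i : Fin n) (F : MvPolynomial (Fin n) K) : MvPolynomial (Fin n) K :=
  coefv i (F.degreeOf i) F

/-- Auxiliary pseudo-division: computes (pseudo-quotient, pseudo-remainder) pairs,
with the first argument as fuel; the total power of the leading coefficient used is
exactly the fuel, so that starting with fuel `max(l - m + 1, 0)` yields the pair
`(Q, R)` of the unique representation `lc(F,x_i)^q • G = Q*F + R` with
`q = max(l - m + 1, 0)` and `deg(R, x_i) < deg(F, x_i)`. -/
noncomputable def pdivAux (i : Fin n) (F : MvPolynomial (Fin n) K) :
    ℕ → MvPolynomial (Fin n) K × MvPolynomial (Fin n) K →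
      MvPolynomial (Fin n) K × MvPolynomial (Fin n) K
  | 0, QR => QR
  | q + 1, QR =>
    if (QR.2).degreeOf i < F.degreeOf i then
      (lcv i F ^ (q + 1) * QR.1, lcv i F ^ (q + 1) * QR.2)
    else
      pdivAux i F q
        (lcv i F * QR.1 +
            coefv i ((QR.2).degreeOf i) QR.2 * X i ^ ((QR.2).degreeOf i - F.degreeOf i),
          lcv i F * QR.2 -
            coefv i ((QR.2).degreeOf i) QR.2 * X i ^ ((QR.2).degreeOf i - F.degreeOf i) * F)

/-- The pseudo-remainder `prem(G, F, x_i)`. -/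
noncomputable def prem (G F : MvPolynomial (Fin n) K) (i : Fin n) : MvPolynomial (Fin n) K :=
  (pdivAux i F (G.degreeOf i + 1 - F.degreeOf i) (0, G)).2

/-- The pseudo-quotient `pquo(G, F, x_i)`. -/
noncomputable def pquo (G F : MvPolynomial (Fin n) K) (i : Fin n) : MvPolynomial (Fin n) K :=
  (pdivAux i F (G.degreeOf i + 1 - F.degreeOf i) (0, G)).1

/-- The class of `P`: the largest index (1-based) of a variable actually occurring in `P`;
the class of a constant is `0`. -/
noncomputable def cls (P : MvPolynomial (Fin n) K) : ℕ :=
  P.vars.sup fun i => (i : ℕ) + 1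

/-- The degree of `G` in the leading variable of `P` (`0` if `P` is constant). -/
noncomputable def degLv (G P : MvPolynomial (Fin n) K) : ℕ :=
  if h : P.vars.Nonempty then G.degreeOf (P.vars.max' h) else 0

/-- `G` is R-reduced with respect to `P`, i.e. `deg(G, lv(P)) < deg(P, lv(P))`. -/
def RReduced (G P : MvPolynomial (Fin n) K) : Prop :=
  degLv G P < degLv P P

/-- The initial of `P`: its leading coefficient w.r.t. its leading variable. -/
noncomputable def ini (P : MvPolynomial (Fin n) K) : MvPolynomial (Fin n) K :=
  if h : P.vars.Nonempty then lcv (P.vars.max' h) P else P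

/-- Pseudo-remainder of `G` w.r.t. `F` in the leading variable of `F`
(in case `F` is constant, `m = 0` and the pseudo-remainder is `0`). -/
noncomputable def premLv (G F : MvPolynomial (Fin n) K) : MvPolynomial (Fin n) K :=
  if h : F.vars.Nonempty then prem G F (F.vars.max' h) else 0

/-- Pseudo-quotient of `G` w.r.t. `F` in the leading variable of `F`. -/
noncomputable def pquoLv (G F : MvPolynomial (Fin n) K) : MvPolynomial (Fin n) K :=
  if h : F.vars.Nonempty then pquo G F (F.vars.max' h) else 0

/-- Iterated pseudo-remainder with respect to a triangular set `[T_1, …, T_r]`: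
`prem(P, T) = prem(⋯prem(P, T_r, lv(T_r)), …, T_1, lv(T_1))`. -/
noncomputable def premTS (P : MvPolynomial (Fin n) K) (L : List (MvPolynomial (Fin n) K)) :
    MvPolynomial (Fin n) K :=
  L.foldr (fun T acc => premLv acc T) P

/-- The Sylvester matrix of `F` and `G` with respect to the variable `x_i`. -/
noncomputable def sylvester (i : Fin n) (F G : MvPolynomial (Fin n) K) :
    Matrix (Fin (G.degreeOf i + F.degreeOf i)) (Fin (G.degreeOf i + F.degreeOf i))
      (MvPolynomial (Fin n) K) :=
  Matrix.of fun r c =>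
    if (r : ℕ) < G.degreeOf i then
      if (r : ℕ) ≤ (c : ℕ) ∧ (c : ℕ) ≤ (r : ℕ) + F.degreeOf i then
        coefv i (F.degreeOf i + (r : ℕ) - (c : ℕ)) F
      else 0
    else
      if (r : ℕ) - G.degreeOf i ≤ (c : ℕ) ∧ (c : ℕ) ≤ (r : ℕ) then
        coefv i (G.degreeOf i + ((r : ℕ) - G.degreeOf i) - (c : ℕ)) G
      else 0

/-- The resultant `res(F, G, x_i)` of `F` and `G` w.r.t. `x_i`
(the determinant of the Sylvester matrix). -/
noncomputable def resv (F G : MvPolynomial (Fin n) K) (i : Fin n) : MvPolynomial (Fin n) K :=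
  (sylvester i F G).det

/-- Resultant of `F` and `G` w.r.t. the leading variable of `G`. -/
noncomputable def resLv (F G : MvPolynomial (Fin n) K) : MvPolynomial (Fin n) K :=
  if h : G.vars.Nonempty then resv F G (G.vars.max' h) else F

/-- Iterated resultant with respect to a triangular set:
`res(F, T) = res(⋯res(F, T_r, lv(T_r)), …, T_1, lv(T_1))`. -/
noncomputable def resTS (F : MvPolynomial (Fin n) K) (L : List (MvPolynomial (Fin n) K)) :
    MvPolynomial (Fin n) K :=
  L.foldr (fun T acc => resLv acc T) F

/-- A triangular set: a nonempty ordered set of nonconstant polynomials with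
strictly increasing classes. -/
def TriangularSet (L : List (MvPolynomial (Fin n) K)) : Prop :=
  L ≠ [] ∧ (∀ T ∈ L, 0 < cls T) ∧ L.Chain' fun A B => cls A < cls B

/-- An ascending set: either a single nonzero constant, or a triangular set in which
every later element is R-reduced with respect to every earlier one. -/
def AscendingSet (L : List (MvPolynomial (Fin n) K)) : Prop :=
  (∃ a : K, a ≠ 0 ∧ L = [MvPolynomial.C a]) ∨
    (TriangularSet L ∧ L.Pairwise fun A B => RReduced B A)

/-- `F` has lower rank than `G`. -/
def rkLT (F G : MvPolynomial (Fin n) K) : Prop :=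
  cls F < cls G ∨ (cls F = cls G ∧ 0 < cls F ∧ degLv F F < degLv G G)

/-- `F` and `G` have the same rank: neither has lower rank than the other. -/
def rkEQ (F G : MvPolynomial (Fin n) K) : Prop :=
  ¬ rkLT F G ∧ ¬ rkLT G F

/-- `B` has lower rank than `A` (as ascending sets). -/
def ascLT (B A : List (MvPolynomial (Fin n) K)) : Prop :=
  (∃ j, j < min A.length B.length ∧
      (∀ i, i < j → rkEQ (A.getD i 0) (B.getD i 0)) ∧ rkLT (B.getD j 0) (A.getD j 0)) ∨
    (A.length < B.length ∧ ∀ i, i < A.length → rkEQ (A.getD i 0) (B.getD i 0))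

/-- A Ritt characteristic set of the ideal `I`: an ascending set contained in `I`
of minimal rank among all ascending sets contained in `I`. -/
def RittCharSet (I : Ideal (MvPolynomial (Fin n) K)) (A : List (MvPolynomial (Fin n) K)) :
    Prop :=
  AscendingSet A ∧ (∀ a ∈ A, a ∈ I) ∧
    ∀ B : List (MvPolynomial (Fin n) K), AscendingSet B → (∀ b ∈ B, b ∈ I) → ¬ ascLT B A

/-- The saturated ideal of a triangular set, as a set of polynomials. -/
def satTS (L : List (MvPolynomial (Fin n) K)) : Set (MvPolynomial (Fin n) K) :=
  {F | ∃ q : ℕ, 0 < q ∧ (L.map ini).prod ^ q * F ∈ Ideal.span {T | T ∈ L}}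

/-- A regular set: a triangular set such that `res(ini(T_j), [T_1, …, T_{j-1}]) ≠ 0`
for `j = 2, …, r`. -/
def RegularSet (L : List (MvPolynomial (Fin n) K)) : Prop :=
  TriangularSet L ∧
    ∀ j : ℕ, 0 < j → j < L.length → resTS (ini (L.getD j 0)) (L.take j) ≠ 0

/-- A normal triangular set: `deg(ini(T_j), lv(T_i)) = 0` for all `i < j`. -/
def NormalSet (L : List (MvPolynomial (Fin n) K)) : Prop :=
  TriangularSet L ∧ L.Pairwise fun A B => degLv (ini B) A = 0

/-- The purely lexicographical order on monomials determined by `x_1 < ⋯ < x_n`. -/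
def plexLT (a b : Fin n →₀ ℕ) : Prop :=
  ∃ k : Fin n, a k < b k ∧ ∀ j : Fin n, k < j → a j = b j

/-- `m` is the leading monomial of `P` w.r.t. the plex order. -/
def IsLpp (P : MvPolynomial (Fin n) K) (m : Fin n →₀ ℕ) : Prop :=
  m ∈ P.support ∧ ∀ m' ∈ P.support, m' ≠ m → plexLT m' m

/-- `G` is the reduced (Buchberger–)Gröbner basis of the ideal `I` w.r.t. the plex
term order determined by `x_1 < ⋯ < x_n`: its elements are nonzero monic members of `I`,
the leading monomial of every nonzero member of `I` is divisible by the leading monomial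
of some element of `G`, every element of `G` is B-reduced w.r.t. the others, and `G`
generates `I`. -/
def IsReducedGB (I : Ideal (MvPolynomial (Fin n) K)) (G : Finset (MvPolynomial (Fin n) K)) :
    Prop :=
  (∀ g ∈ G, g ∈ I ∧ g ≠ 0 ∧ ∀ m, IsLpp g m → g.coeff m = 1) ∧
    (∀ F ∈ I, F ≠ 0 → ∃ g ∈ G, ∃ mg mF, IsLpp g mg ∧ IsLpp F mF ∧ mg ≤ mF) ∧
    (∀ g ∈ G, ∀ g' ∈ G, g' ≠ g → ∀ m ∈ g.support, ∀ m', IsLpp g' m' → ¬ m' ≤ m) ∧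
    Ideal.span (G : Set (MvPolynomial (Fin n) K)) = I

/-- `Cs` is the W-characteristic set of `I`: the minimal triangular set contained in the
reduced plex Gröbner basis `G` of `I`, i.e. for each class realized in `G`, `Cs` contains
the element of that class whose leading monomial is minimal w.r.t. the plex order, the
elements being ordered by increasing class (equivalently, by the plex order). -/
def IsWCharSet (I : Ideal (MvPolynomial (Fin n) K)) (Cs : List (MvPolynomial (Fin n) K)) :
    Prop :=
  ∃ G : Finset (MvPolynomial (Fin n) K), IsReducedGB I G ∧
    (Cs.Chain' fun A B => cls A < cls B) ∧
    (∀ c ∈ Cs, c ∈ G) ∧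
    (∀ g ∈ G, ∃ c ∈ Cs, cls c = cls g) ∧
    ∀ c ∈ Cs, ∀ g ∈ G, cls g = cls c → g ≠ c →
      ∃ mc mg, IsLpp c mc ∧ IsLpp g mg ∧ plexLT mc mg

/-- The set of common zeros of a set `S` of polynomials over `k`, taken in `Kc ^ n`
for an extension `Kc` of `k`. -/
def zeroSet {k : Type*} [Field k] (Kc : Type*) [CommRing Kc] [Algebra k Kc]
    (S : Set (MvPolynomial (Fin n) k)) : Set (Fin n → Kc) :=
  {a | ∀ p ∈ S, MvPolynomial.aeval a p = 0}

/-!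
Pseudo-dividing `F ∈ ⟨P⟩` successively by `C_r, …, C_1` gives `M F = Q + R` with `M` dividing a
power of the product `J` of the initials, `Q ∈ ⟨C⟩ ⊆ ⟨P⟩`, and `R ∈ ⟨P⟩` reduced with respect to
every `C_j` in its leading variable. If `R ≠ 0`, its plex leading monomial is divisible by that of
some `g` in the reduced Gröbner basis. The element `c` of `C` of the same class as `g` has a
plex-smaller leading monomial, so the exponent of `lv c` in `lm(c)`, which is `deg(c, lv c)`, is
at most its exponent in `lm(g)`, hence in `lm(R)`, hence at most `deg(R, lv c)`: this contradicts
reducedness. Hence `R = 0` and `J^(N+1) F ∈ ⟨C⟩`.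
-/

theorem coeff_coefv (i : Fin n) (d : ℕ) (F : MvPolynomial (Fin n) K) (μ : Fin n →₀ ℕ) :
    (coefv i d F).coeff μ = if μ i = 0 then F.coeff (μ + Finsupp.single i d) else 0 := by
  classical
  have hErase : ∀ m : Fin n →₀ ℕ, m i = d →
      (Finsupp.erase i m = μ ↔ μ i = 0 ∧ m = μ + Finsupp.single i d) := by
    intro m hm
    constructor
    · rintro rfl
      exact ⟨by simp, by rw [← hm, Finsupp.erase_add_single]⟩
    · rintro ⟨hμ, rfl⟩
      ext k
      by_cases hk : k = i <;> simp [hk, hμ]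
  rw [coefv, coeff_sum]
  simp only [coeff_monomial]
  rw [Finset.sum_congr rfl fun m hm => if_congr (hErase m (Finset.mem_filter.1 hm).2) rfl rfl]
  by_cases hμ : μ i = 0 <;> simp [hμ, Finset.sum_ite_eq', eq_comm]

theorem degreeOf_coefv_le (i i' : Fin n) (d : ℕ) (F : MvPolynomial (Fin n) K) :
    degreeOf i' (coefv i d F) ≤ degreeOf i' F := by
  refine degreeOf_le_iff.mpr fun m hm => ?_
  rw [mem_support_iff, coeff_coefv] at hm
  split_ifs at hm
  · calc m i' ≤ (m + Finsupp.single i d) i' := by simp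
      _ ≤ degreeOf i' F := le_degreeOf_of_mem_support i' (mem_support_iff.mpr hm)
  · exact absurd rfl hm

theorem degreeOf_coefv_self (i : Fin n) (d : ℕ) (F : MvPolynomial (Fin n) K) :
    degreeOf i (coefv i d F) = 0 := by
  refine Nat.le_zero.mp (degreeOf_le_iff.mpr fun m hm => ?_)
  rw [mem_support_iff, coeff_coefv] at hm
  split_ifs at hm with h
  · exact h.le
  · exact absurd rfl hm

theorem coeff_coefv_mul_X_pow (i : Fin n) (d : ℕ) (Z : MvPolynomial (Fin n) K)
    (m : Fin n →₀ ℕ) :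
    (coefv i d Z * X i ^ d).coeff m = if m i = d then Z.coeff m else 0 := by
  classical
  rw [X_pow_eq_monomial, coeff_mul_monomial']
  split_ifs with hd hmd hmd
  · rw [coeff_coefv, mul_one, tsub_add_cancel_of_le hd, if_pos]
    simp [Finsupp.tsub_apply, hmd]
  · rw [coeff_coefv, if_neg, zero_mul]
    have := Finsupp.single_le_iff.mp hd
    simp only [Finsupp.tsub_apply, Finsupp.single_eq_same]
    omega
  · exact absurd (Finsupp.single_le_iff.mpr hmd.ge) hd
  · rfl

theorem degreeOf_sub_coefv_mul_X_pow_lt {i : Fin n} {d : ℕ} {Z : MvPolynomial (Fin n) K}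
    (hd : 0 < d) (hZ : degreeOf i Z ≤ d) :
    degreeOf i (Z - coefv i d Z * X i ^ d) < d := by
  have hcoeff : ∀ m : Fin n →₀ ℕ, d ≤ m i → Z.coeff m = (coefv i d Z * X i ^ d).coeff m := by
    intro m hm
    rw [coeff_coefv_mul_X_pow]
    split_ifs with h
    · rfl
    · exact notMem_support_iff.mp (notMem_support_of_degreeOf_lt i (by omega))
  exact degreeOf_sub_lt hd (fun m _ => hcoeff m) (fun m _ => hcoeff m)

theorem degreeOf_mul_le_of_degreeOf_eq_zero {i : Fin n} {A : MvPolynomial (Fin n) K}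
    (hA : degreeOf i A = 0) (B : MvPolynomial (Fin n) K) :
    degreeOf i (A * B) ≤ degreeOf i B := by
  simpa [hA] using degreeOf_mul_le i A B

theorem degreeOf_pow_eq_zero {i : Fin n} {A : MvPolynomial (Fin n) K}
    (hA : degreeOf i A = 0) (k : ℕ) : degreeOf i (A ^ k) = 0 := by
  simpa [hA] using degreeOf_pow_le i A k

theorem degreeOf_lcv_mul_sub_lt {i : Fin n} {F R : MvPolynomial (Fin n) K}
    (hF : 0 < degreeOf i F) (hFR : degreeOf i F ≤ degreeOf i R) :
    degreeOf i (lcv i F * R -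
        coefv i (degreeOf i R) R * X i ^ (degreeOf i R - degreeOf i F) * F) <
      degreeOf i R := by
  set d := degreeOf i R
  set m := degreeOf i F
  set R₀ := R - coefv i d R * X i ^ d
  set F₀ := F - lcv i F * X i ^ m
  have hR₀ : degreeOf i R₀ < d := degreeOf_sub_coefv_mul_X_pow_lt (by omega) le_rfl
  have hF₀ : degreeOf i F₀ < m := degreeOf_sub_coefv_mul_X_pow_lt hF le_rfl
  -- the leading terms `lc(F) lc(R) x_i^d` cancel
  have hsplit : lcv i F * R - coefv i d R * X i ^ (d - m) * F =
      lcv i F * R₀ - coefv i d R * X i ^ (d - m) * F₀ := by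
    have hX : (X i ^ d : MvPolynomial (Fin n) K) = X i ^ (d - m) * X i ^ m := by
      rw [← pow_add, Nat.sub_add_cancel hFR]
    simp only [R₀, F₀, hX]
    ring
  rw [hsplit]
  refine (degreeOf_sub_le _ _ _).trans_lt (max_lt ?_ ?_)
  · exact (degreeOf_mul_le_of_degreeOf_eq_zero (degreeOf_coefv_self i _ F) _).trans_lt hR₀
  · calc _ ≤ degreeOf i (coefv i d R * X i ^ (d - m)) + degreeOf i F₀ := degreeOf_mul_le _ _ _
      _ ≤ d - m + degreeOf i F₀ := by
        grw [degreeOf_mul_le_of_degreeOf_eq_zero (degreeOf_coefv_self i d R), degreeOf_X_self_pow]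
      _ < d := by omega

theorem pdivAux_spec (i : Fin n) (F : MvPolynomial (Fin n) K) (q : ℕ)
    (QR : MvPolynomial (Fin n) K × MvPolynomial (Fin n) K) :
    lcv i F ^ q * (QR.1 * F + QR.2) = (pdivAux i F q QR).1 * F + (pdivAux i F q QR).2 := by
  induction q generalizing QR with
  | zero => simp [pdivAux]
  | succ q ih =>
    rw [pdivAux]
    split_ifs
    · ring
    · rw [← ih]
      ring

theorem degreeOf_pdivAux_snd_lt {i : Fin n} {F : MvPolynomial (Fin n) K}
    (hF : 0 < degreeOf i F) (q : ℕ) (QR : MvPolynomial (Fin n) K × MvPolynomial (Fin n) K)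
    (hq : degreeOf i QR.2 < degreeOf i F + q) :
    degreeOf i (pdivAux i F q QR).2 < degreeOf i F := by
  induction q generalizing QR with
  | zero => simpa [pdivAux] using hq
  | succ q ih =>
    rw [pdivAux]
    split_ifs with hlt
    · exact (degreeOf_mul_le_of_degreeOf_eq_zero
        (degreeOf_pow_eq_zero (degreeOf_coefv_self i _ F) _) _).trans_lt hlt
    · exact ih _ ((degreeOf_lcv_mul_sub_lt hF (not_lt.mp hlt)).trans_le (by omega))

theorem degreeOf_pdivAux_snd_le {i i' : Fin n} (hi : i' ≠ i) {F : MvPolynomial (Fin n) K}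
    (hF : degreeOf i' F = 0) (q : ℕ) (QR : MvPolynomial (Fin n) K × MvPolynomial (Fin n) K) :
    degreeOf i' (pdivAux i F q QR).2 ≤ degreeOf i' QR.2 := by
  have hlc : degreeOf i' (lcv i F) = 0 := Nat.le_zero.mp (hF ▸ degreeOf_coefv_le i i' _ F)
  induction q generalizing QR with
  | zero => exact le_rfl
  | succ q ih =>
    rw [pdivAux]
    split_ifs
    · exact degreeOf_mul_le_of_degreeOf_eq_zero (degreeOf_pow_eq_zero hlc _) _
    · refine (ih _).trans ((degreeOf_sub_le _ _ _).trans
        (max_le (degreeOf_mul_le_of_degreeOf_eq_zero hlc _) ?_))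
      calc _ ≤ degreeOf i' (coefv i (degreeOf i QR.2) QR.2 * X i ^ _) + degreeOf i' F :=
            degreeOf_mul_le _ _ _
        _ ≤ degreeOf i' (coefv i (degreeOf i QR.2) QR.2) + 0 + 0 := by
            grw [degreeOf_mul_le, degreeOf_X_pow_of_ne _ hi, hF]
        _ ≤ degreeOf i' QR.2 := by simpa using degreeOf_coefv_le i i' _ QR.2

theorem degLv_of_nonempty (G : MvPolynomial (Fin n) K) {P : MvPolynomial (Fin n) K}
    (hP : P.vars.Nonempty) : degLv G P = degreeOf (P.vars.max' hP) G :=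
  dif_pos hP

theorem premLv_spec (G T : MvPolynomial (Fin n) K) (hT : T.vars.Nonempty) :
    ∃ (q : ℕ) (Q : MvPolynomial (Fin n) K), ini T ^ q * G = Q * T + premLv G T := by
  rw [premLv, dif_pos hT, ini, dif_pos hT, prem]
  exact ⟨_, _, by simpa using pdivAux_spec (T.vars.max' hT) T _ (0, G)⟩

theorem rReduced_premLv (G : MvPolynomial (Fin n) K) {T : MvPolynomial (Fin n) K}
    (hT : T.vars.Nonempty) : RReduced (premLv G T) T := by
  have hT0 : 0 < degreeOf (T.vars.max' hT) T :=
    Nat.pos_of_ne_zero (mem_vars_iff_degreeOf_ne_zero.mp (T.vars.max'_mem hT))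
  rw [RReduced, degLv_of_nonempty _ hT, degLv_of_nonempty _ hT, premLv, dif_pos hT, prem]
  exact degreeOf_pdivAux_snd_lt hT0 _ _ (by dsimp only; omega)

theorem degreeOf_premLv_le {i : Fin n} (G : MvPolynomial (Fin n) K) {T : MvPolynomial (Fin n) K}
    (hi : degreeOf i T = 0) : degreeOf i (premLv G T) ≤ degreeOf i G := by
  by_cases hT : T.vars.Nonempty
  · have hne : i ≠ T.vars.max' hT := fun h =>
      mem_vars_iff_degreeOf_ne_zero.mp (h ▸ T.vars.max'_mem hT) hi
    rw [premLv, dif_pos hT, prem]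
    exact degreeOf_pdivAux_snd_le hne hi _ _
  · simp [premLv, dif_neg hT]

theorem lt_cls_of_mem_vars {P : MvPolynomial (Fin n) K} {k : Fin n} (hk : k ∈ P.vars) :
    (k : ℕ) < cls P :=
  Finset.le_sup (f := fun i : Fin n => (i : ℕ) + 1) hk

theorem degreeOf_eq_zero_of_cls_le {P : MvPolynomial (Fin n) K} {k : Fin n}
    (hk : cls P ≤ k) : degreeOf k P = 0 := by
  by_contra h
  exact absurd (lt_cls_of_mem_vars (mem_vars_iff_degreeOf_ne_zero.mpr h)) (not_lt.mpr hk)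

theorem apply_eq_zero_of_cls_le {P : MvPolynomial (Fin n) K} {m : Fin n →₀ ℕ}
    (hm : m ∈ P.support) {k : Fin n} (hk : cls P ≤ k) : m k = 0 :=
  Nat.le_zero.mp ((le_degreeOf_of_mem_support k hm).trans (degreeOf_eq_zero_of_cls_le hk).le)

theorem cls_eq_max'_add_one {P : MvPolynomial (Fin n) K} (hP : P.vars.Nonempty) :
    cls P = (P.vars.max' hP : ℕ) + 1 :=
  le_antisymm (Finset.sup_le fun i hi => Nat.succ_le_succ (P.vars.le_max' i hi))
    (lt_cls_of_mem_vars (P.vars.max'_mem hP))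

theorem vars_nonempty_of_mem_of_ne_top {I : Ideal (MvPolynomial (Fin n) K)} (hI : I ≠ ⊤)
    {P : MvPolynomial (Fin n) K} (hP : P ∈ I) (hP0 : P ≠ 0) : P.vars.Nonempty := by
  by_contra h
  have hC : P = C (P.coeff 0) :=
    vars_eq_empty_iff_eq_C.mp (Finset.not_nonempty_iff_eq_empty.mp h)
  have hunit : IsUnit P := hC ▸ (Ne.isUnit fun h0 => hP0 (by rw [hC, h0, C_0])).map C
  exact hI (Ideal.eq_top_of_isUnit_mem I hP hunit)

theorem premTS_spec (F : MvPolynomial (Fin n) K) {L : List (MvPolynomial (Fin n) K)}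
    (hL : ∀ T ∈ L, T.vars.Nonempty) :
    ∃ (M : MvPolynomial (Fin n) K) (N : ℕ), M ∣ (L.map ini).prod ^ N ∧
      M * F - premTS F L ∈ Ideal.span {T | T ∈ L} := by
  induction L with
  | nil => exact ⟨1, 0, by simp, by simp [premTS]⟩
  | cons T L ih =>
    obtain ⟨M, N, hM, hMF⟩ := ih fun T' hT' => hL T' (List.mem_cons_of_mem T hT')
    obtain ⟨q, Q, hQ⟩ := premLv_spec (premTS F L) T (hL T List.mem_cons_self)
    refine ⟨ini T ^ q * M, q + N, ?_, ?_⟩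
    · rw [List.map_cons, List.prod_cons, mul_pow]
      exact mul_dvd_mul (pow_dvd_pow _ (by omega)) (hM.trans (pow_dvd_pow _ (by omega)))
    · have hdiff : ini T ^ q * M * F - premLv (premTS F L) T =
          ini T ^ q * (M * F - premTS F L) + Q * T := by
        linear_combination hQ
      change ini T ^ q * M * F - premLv (premTS F L) T ∈ _
      rw [hdiff]
      exact add_mem
        (Ideal.mul_mem_left _ _ (Ideal.span_mono (fun _ => List.mem_cons_of_mem T) hMF))
        (Ideal.mul_mem_left _ _ (Ideal.subset_span List.mem_cons_self))

theorem rReduced_premTS (F : MvPolynomial (Fin n) K) {L : List (MvPolynomial (Fin n) K)}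
    (hL : ∀ T ∈ L, T.vars.Nonempty) (hcls : L.Pairwise fun A B => cls A < cls B) :
    ∀ c ∈ L, RReduced (premTS F L) c := by
  induction L with
  | nil => simp
  | cons T L ih =>
    intro c hc
    rcases List.mem_cons.mp hc with rfl | hcL
    · exact rReduced_premLv _ (hL c hc)
    · have hc' := hL c hc
      have hTc : cls T < cls c := List.rel_of_pairwise_cons hcls hcL
      have hred := ih (fun T' hT' => hL T' (List.mem_cons_of_mem T hT')) hcls.of_cons c hcL
      rw [RReduced, degLv_of_nonempty _ hc'] at hred ⊢
      refine (degreeOf_premLv_le _ (degreeOf_eq_zero_of_cls_le ?_)).trans_lt hred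
      rw [cls_eq_max'_add_one hc'] at hTc
      omega

theorem premTS_mem {I : Ideal (MvPolynomial (Fin n) K)} {F : MvPolynomial (Fin n) K}
    {L : List (MvPolynomial (Fin n) K)} (hL : ∀ T ∈ L, T.vars.Nonempty) (hLI : ∀ T ∈ L, T ∈ I)
    (hF : F ∈ I) : premTS F L ∈ I := by
  obtain ⟨M, -, -, hMF⟩ := premTS_spec F hL
  simpa using sub_mem (I.mul_mem_left M hF) (Ideal.span_le.mpr hLI hMF)

theorem mem_satTS_of_premTS_eq_zero {F : MvPolynomial (Fin n) K}
    {L : List (MvPolynomial (Fin n) K)} (hL : ∀ T ∈ L, T.vars.Nonempty)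
    (h : premTS F L = 0) : F ∈ satTS L := by
  obtain ⟨M, N, ⟨E, hE⟩, hMF⟩ := premTS_spec F hL
  rw [h, sub_zero] at hMF
  refine ⟨N + 1, N.succ_pos, ?_⟩
  rw [show (L.map ini).prod ^ (N + 1) * F = E * (L.map ini).prod * (M * F) by
    rw [pow_succ, hE]; ring]
  exact Ideal.mul_mem_left _ _ hMF

theorem plexLT_asymm {a b : Fin n →₀ ℕ} (hab : plexLT a b) (hba : plexLT b a) : False := by
  obtain ⟨k, hk, hab⟩ := hab
  obtain ⟨l, hl, hba⟩ := hba
  rcases lt_trichotomy k l with hkl | rfl | hlk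
  · exact absurd (hab l hkl) (by omega)
  · omega
  · exact absurd (hba k hlk) (by omega)

theorem IsLpp.unique {P : MvPolynomial (Fin n) K} {m m' : Fin n →₀ ℕ} (hm : IsLpp P m)
    (hm' : IsLpp P m') : m = m' := by
  by_contra h
  exact plexLT_asymm (hm.2 m' hm'.1 (Ne.symm h)) (hm'.2 m hm.1 h)

theorem plexLT.apply_le {a b : Fin n →₀ ℕ} (h : plexLT a b) {j : Fin n}
    (hb : ∀ k, j < k → b k = 0) : a j ≤ b j := by
  obtain ⟨k, hlt, heq⟩ := h
  rcases lt_trichotomy j k with hjk | rfl | hkj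
  · have := hb k hjk
    omega
  · exact hlt.le
  · exact (heq j hkj).le

theorem IsLpp.degreeOf_le {P : MvPolynomial (Fin n) K} {m : Fin n →₀ ℕ} (hm : IsLpp P m)
    {j : Fin n} (hj : cls P ≤ j + 1) : degreeOf j P ≤ m j := by
  refine degreeOf_le_iff.mpr fun m' hm' => ?_
  rcases eq_or_ne m' m with rfl | hne
  · exact le_rfl
  · exact (hm.2 m' hm' hne).apply_le fun k hk => apply_eq_zero_of_cls_le hm.1 (by omega)

theorem eq_zero_of_forall_rReduced {I : Ideal (MvPolynomial (Fin n) K)}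
    {Cs : List (MvPolynomial (Fin n) K)} (hW : IsWCharSet I Cs) {R : MvPolynomial (Fin n) K}
    (hR : R ∈ I) (hred : ∀ c ∈ Cs, RReduced R c) : R = 0 := by
  obtain ⟨G, hGB, -, -, hGcls, hmin⟩ := hW
  by_contra hR0
  obtain ⟨g, hg, mg, mR, hmg, hmR, hgR⟩ := hGB.2.1 R hR hR0
  obtain ⟨c, hc, hcg⟩ := hGcls g hg
  have hcv : c.vars.Nonempty := by
    by_contra h
    simpa [RReduced, degLv, h] using hred c hc
  set j := c.vars.max' hcv
  have hj : cls c = j + 1 := cls_eq_max'_add_one hcv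
  obtain ⟨mc, hmc, hmcg⟩ : ∃ mc, IsLpp c mc ∧ mc j ≤ mg j := by
    rcases eq_or_ne g c with rfl | hne
    · exact ⟨mg, hmg, le_rfl⟩
    · obtain ⟨mc, mg', hmc, hmg', hlt⟩ := hmin c hc g hg hcg.symm hne
      rw [hmg'.unique hmg] at hlt
      exact ⟨mc, hmc, hlt.apply_le fun k hk => apply_eq_zero_of_cls_le hmg.1 (by omega)⟩
  have hlt : degreeOf j R < degreeOf j c := by
    have := hred c hc
    rwa [RReduced, degLv_of_nonempty _ hcv, degLv_of_nonempty _ hcv] at this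
  have := calc degreeOf j c ≤ mc j := hmc.degreeOf_le hj.le
    _ ≤ mg j := hmcg
    _ ≤ mR j := hgR j
    _ ≤ degreeOf j R := le_degreeOf_of_mem_support j hmR.1
  omega

theorem statement7_general {n : ℕ} {K : Type*} [Field K]
    (P : Finset (MvPolynomial (Fin n) K))
    (hproper : Ideal.span (P : Set (MvPolynomial (Fin n) K)) ≠ ⊤)
    (Cs : List (MvPolynomial (Fin n) K))
    (hW : IsWCharSet (Ideal.span (P : Set (MvPolynomial (Fin n) K))) Cs) :
    Ideal.span {c | c ∈ Cs} ≤ Ideal.span (P : Set (MvPolynomial (Fin n) K)) ∧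
      ∀ F ∈ Ideal.span (P : Set (MvPolynomial (Fin n) K)), F ∈ satTS Cs := by
  obtain ⟨G, hGB, hchain, hCG, -⟩ := id hW
  have hCI : ∀ c ∈ Cs, c ∈ Ideal.span (P : Set (MvPolynomial (Fin n) K)) :=
    fun c hc => (hGB.1 c (hCG c hc)).1
  have hCv : ∀ c ∈ Cs, c.vars.Nonempty :=
    fun c hc => vars_nonempty_of_mem_of_ne_top hproper (hCI c hc) (hGB.1 c (hCG c hc)).2.1
  have hcls : Cs.Pairwise fun A B => cls A < cls B :=
    List.pairwise_map.mp ((List.isChain_map cls).mpr hchain).pairwise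
  refine ⟨Ideal.span_le.mpr hCI, fun F hF => mem_satTS_of_premTS_eq_zero hCv ?_⟩
  exact eq_zero_of_forall_rReduced hW (premTS_mem hCv hCI hF) (rReduced_premTS F hCv hcls)

/-- Proposition charpro (b). Let `C = [C_1, …, C_r]` be the
W-characteristic set of `⟨P⟩`. Then `⟨C_1, …, C_r⟩ ⊆ ⟨P⟩ ⊆ sat(C)`. -/
theorem statement7 {n : ℕ} {K : Type*} [Field K]
    (P : Finset (MvPolynomial (Fin n) K)) (hne : P.Nonempty) (h0 : ∀ p ∈ P, p ≠ 0)
    (hproper : Ideal.span (P : Set (MvPolynomial (Fin n) K)) ≠ ⊤)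
    (Cs : List (MvPolynomial (Fin n) K))
    (hW : IsWCharSet (Ideal.span (P : Set (MvPolynomial (Fin n) K))) Cs) :
    Ideal.span {c | c ∈ Cs} ≤ Ideal.span (P : Set (MvPolynomial (Fin n) K)) ∧
      ∀ F ∈ Ideal.span (P : Set (MvPolynomial (Fin n) K)), F ∈ satTS Cs :=
  statement7_general P hproper Cs hW

end CharSets
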